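/- arXiv:2303.07499 — 8 statements merged into one kernel-verified Lean document; each statement's English description precedes it below -/
import Mathlib

section
/- The one-relator group Γ = ⟨t, a | t a t⁻¹ a t² a t⁻¹ a⁻¹ t a⁻¹ t⁻² a⁻¹ t² a⁻¹ t⁻² a⁻¹⟩ is not bi-orderable. -/
/-- A group is bi-orderable if there is a linear (strict total) order on it which is
invariant under both left and right multiplication. -/
def IsBiOrderable (G : Type*) [Group G] : Prop :=
  ∃ lt : G → G → Prop, IsStrictTotalOrder G lt ∧
    (∀ f g h : G, lt g h → lt (f * g) (f * h)) ∧
    (∀ f g h : G, lt g h → lt (g * f) (h * f))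

namespace OneRelatorExample

/-- `t` as an element of the free group on two generators `{t, a}`. -/
def t : FreeGroup Bool := FreeGroup.of true

/-- `a` as an element of the free group on two generators `{t, a}`. -/
def a : FreeGroup Bool := FreeGroup.of false

/-- The relator `t a t⁻¹ a t² a t⁻¹ a⁻¹ t a⁻¹ t⁻² a⁻¹ t² a⁻¹ t⁻² a⁻¹`. -/
def relator : FreeGroup Bool :=
  t * a * t⁻¹ * a * t ^ 2 * a * t⁻¹ * a⁻¹ * t * a⁻¹ * (t ^ 2)⁻¹ * a⁻¹ * t ^ 2 * a⁻¹ *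
    (t ^ 2)⁻¹ * a⁻¹

/-- The one-relator group `Γ = ⟨t, a | t a t⁻¹ a t² a t⁻¹ a⁻¹ t a⁻¹ t⁻² a⁻¹ t² a⁻¹ t⁻² a⁻¹⟩`. -/
abbrev Γ : Type := PresentedGroup ({relator} : Set (FreeGroup Bool))

end OneRelatorExample

namespace GammaNotBiorderableAux

open OneRelatorExample

/-- Key order-theoretic lemma: in a bi-ordered group, a relation `x z x⁻¹ = z * z`
with `1 < x` and `1 < z` forces `z < x`. -/
lemma helper_dom {G : Type*} [Group G] (lt : G → G → Prop)
    (hirr : ∀ g, ¬ lt g g)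
    (htr : ∀ {x y z : G}, lt x y → lt y z → lt x z)
    (htri : ∀ x y : G, lt x y ∨ x = y ∨ lt y x)
    (hl : ∀ f g h : G, lt g h → lt (f * g) (f * h))
    (hr : ∀ f g h : G, lt g h → lt (g * f) (h * f))
    (x z : G) (hx : lt 1 x) (hz : lt 1 z) (hxz : x * z * x⁻¹ = z * z) :
    lt z x := by
  have hxz' : x * z = z * z * x := by
    have h2 : x * z * x⁻¹ * x = z * z * x := by rw [hxz]
    calc x * z = x * z * x⁻¹ * x := by group
      _ = z * z * x := h2
  rcases htri x z with h | h | h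
  · exfalso
    have h1 : lt (z⁻¹ * x * z) (z⁻¹ * z * z) := hr z _ _ (hl z⁻¹ _ _ h)
    have e : z⁻¹ * x * z = z * x := by
      calc z⁻¹ * x * z = z⁻¹ * (x * z) := by group
        _ = z⁻¹ * (z * z * x) := by rw [hxz']
        _ = z * x := by group
    have e2 : z⁻¹ * z * z = z := by group
    rw [e, e2] at h1
    have h4 := hl z⁻¹ _ _ h1
    have e3 : z⁻¹ * (z * x) = x := by group
    have e4 : z⁻¹ * z = 1 := by group
    rw [e3, e4] at h4
    exact hirr 1 (htr hx h4)
  · exfalso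
    subst h
    have e : x = x * x := by
      calc x = x * x * x⁻¹ := by group
        _ = x * x := hxz
    have e2 : (1 : G) = x := mul_left_cancel (a := x) (by rw [← e, mul_one])
    rw [← e2] at hx
    exact hirr 1 hx
  · exact h

/-- From a bi-invariant strict total order, a positive generator `A` and the relation
`(TAT⁻¹)(A·T²AT⁻²)(TAT⁻¹)⁻¹ = (A·T²AT⁻²)²` we derive a contradiction. -/
lemma helper_main {G : Type*} [Group G] (lt : G → G → Prop)
    (hirr : ∀ g, ¬ lt g g)
    (htr : ∀ {x y z : G}, lt x y → lt y z → lt x z)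
    (htri : ∀ x y : G, lt x y ∨ x = y ∨ lt y x)
    (hl : ∀ f g h : G, lt g h → lt (f * g) (f * h))
    (hr : ∀ f g h : G, lt g h → lt (g * f) (h * f))
    (T A : G) (hA : lt 1 A)
    (hrel : (T * A * T⁻¹) * (A * (T * T * A * (T * T)⁻¹)) * (T * A * T⁻¹)⁻¹
      = (A * (T * T * A * (T * T)⁻¹)) * (A * (T * T * A * (T * T)⁻¹))) : False := by
  have hpos : ∀ g h : G, lt 1 h → lt 1 (g * h * g⁻¹) := by
    intro g h hh
    have h1 : lt (g * 1 * g⁻¹) (g * h * g⁻¹) := hr g⁻¹ _ _ (hl g _ _ hh)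
    have e : g * 1 * g⁻¹ = 1 := by group
    rwa [e] at h1
  have hb1 : lt 1 (T * A * T⁻¹) := hpos T A hA
  have hb2 : lt 1 (T * T * A * (T * T)⁻¹) := hpos (T * T) A hA
  have hb3 : lt 1 (T * T * T * A * (T * T * T)⁻¹) := hpos (T * T * T) A hA
  have hZ : lt 1 (A * (T * T * A * (T * T)⁻¹)) := by
    have h1 : lt (1 * (T * T * A * (T * T)⁻¹)) (A * (T * T * A * (T * T)⁻¹)) := hr _ _ _ hA
    rw [one_mul] at h1
    exact htr hb2 h1
  have h1 : lt (A * (T * T * A * (T * T)⁻¹)) (T * A * T⁻¹) :=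
    helper_dom lt hirr @htr htri hl hr _ _ hb1 hZ hrel
  have hb2b1 : lt (T * T * A * (T * T)⁻¹) (T * A * T⁻¹) := by
    have h2 : lt (1 * (T * T * A * (T * T)⁻¹)) (A * (T * T * A * (T * T)⁻¹)) := hr _ _ _ hA
    rw [one_mul] at h2
    exact htr h2 h1
  have rel2 : (T * T * A * (T * T)⁻¹)
      * ((T * A * T⁻¹) * (T * T * T * A * (T * T * T)⁻¹)) * (T * T * A * (T * T)⁻¹)⁻¹
      = ((T * A * T⁻¹) * (T * T * T * A * (T * T * T)⁻¹))
        * ((T * A * T⁻¹) * (T * T * T * A * (T * T * T)⁻¹)) := by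
    have h := congrArg (fun g : G => T * g * T⁻¹) hrel
    calc (T * T * A * (T * T)⁻¹)
        * ((T * A * T⁻¹) * (T * T * T * A * (T * T * T)⁻¹)) * (T * T * A * (T * T)⁻¹)⁻¹
        = T * ((T * A * T⁻¹) * (A * (T * T * A * (T * T)⁻¹)) * (T * A * T⁻¹)⁻¹) * T⁻¹ := by
          group
      _ = T * ((A * (T * T * A * (T * T)⁻¹)) * (A * (T * T * A * (T * T)⁻¹))) * T⁻¹ := h
      _ = ((T * A * T⁻¹) * (T * T * T * A * (T * T * T)⁻¹))
          * ((T * A * T⁻¹) * (T * T * T * A * (T * T * T)⁻¹)) := by group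
  have hZ' : lt 1 ((T * A * T⁻¹) * (T * T * T * A * (T * T * T)⁻¹)) := by
    have h2 : lt ((T * A * T⁻¹) * 1) ((T * A * T⁻¹) * (T * T * T * A * (T * T * T)⁻¹)) :=
      hl _ _ _ hb3
    rw [mul_one] at h2
    exact htr hb1 h2
  have h3 : lt ((T * A * T⁻¹) * (T * T * T * A * (T * T * T)⁻¹)) (T * T * A * (T * T)⁻¹) :=
    helper_dom lt hirr @htr htri hl hr _ _ hb2 hZ' rel2
  have hb1b2 : lt (T * A * T⁻¹) (T * T * A * (T * T)⁻¹) := by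
    have h4 : lt ((T * A * T⁻¹) * 1) ((T * A * T⁻¹) * (T * T * T * A * (T * T * T)⁻¹)) :=
      hl _ _ _ hb3
    rw [mul_one] at h4
    exact htr h4 h3
  exact hirr _ (htr hb1b2 hb2b1)

/-- The image of `t` in `Γ`. -/
def T : Γ := PresentedGroup.of true

/-- The image of `a` in `Γ`. -/
def A : Γ := PresentedGroup.of false

lemma word_eq_one :
    T * A * T⁻¹ * A * (T * T) * A * T⁻¹ * A⁻¹ * T * A⁻¹ * (T * T)⁻¹ * A⁻¹ * (T * T) * A⁻¹ *
      (T * T)⁻¹ * A⁻¹ = 1 := by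
  have h1 : PresentedGroup.mk {relator} relator = 1 := by
    apply (QuotientGroup.eq_one_iff _).mpr
    exact Subgroup.subset_normalClosure (Set.mem_singleton _)
  have h2 : PresentedGroup.mk {relator} relator
      = T * A * T⁻¹ * A * (T * T) * A * T⁻¹ * A⁻¹ * T * A⁻¹ * (T * T)⁻¹ * A⁻¹ * (T * T) * A⁻¹ *
      (T * T)⁻¹ * A⁻¹ := by
    simp only [relator, t, a, map_mul, map_inv, map_pow, pow_two]
    rfl
  rw [← h2, h1]

lemma keyrel :
    (T * A * T⁻¹) * (A * (T * T * A * (T * T)⁻¹)) * (T * A * T⁻¹)⁻¹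
      = (A * (T * T * A * (T * T)⁻¹)) * (A * (T * T * A * (T * T)⁻¹)) := by
  calc (T * A * T⁻¹) * (A * (T * T * A * (T * T)⁻¹)) * (T * A * T⁻¹)⁻¹
      = (T * A * T⁻¹ * A * (T * T) * A * T⁻¹ * A⁻¹ * T * A⁻¹ * (T * T)⁻¹ * A⁻¹ * (T * T) * A⁻¹ *
      (T * T)⁻¹ * A⁻¹) * ((A * (T * T * A * (T * T)⁻¹)) * (A * (T * T * A * (T * T)⁻¹))) := by
        group
    _ = (A * (T * T * A * (T * T)⁻¹)) * (A * (T * T * A * (T * T)⁻¹)) := by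
        rw [word_eq_one, one_mul]

lemma A_ne_one : A ≠ 1 := by
  have hcond : ∀ r ∈ ({relator} : Set (FreeGroup Bool)),
      FreeGroup.lift (fun b => Multiplicative.ofAdd (if b then (0 : ZMod 2) else 1)) r = 1 := by
    intro r hr
    rw [Set.mem_singleton_iff] at hr
    subst hr
    simp only [relator, t, a, map_mul, map_inv, map_pow, FreeGroup.lift_apply_of]
    decide
  intro hA1
  have := PresentedGroup.toGroup.of hcond (x := false)
  rw [show PresentedGroup.of false = A from rfl, hA1, map_one] at this
  exact absurd this.symm (by decide)

end GammaNotBiorderableAux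

/-- The one-relator group `Γ` is not bi-orderable. -/
theorem gamma_not_biorderable : ¬ IsBiOrderable OneRelatorExample.Γ := by
  rintro ⟨lt, hsto, hl, hr⟩
  letI := hsto
  have hirr : ∀ g : OneRelatorExample.Γ, ¬ lt g g := fun g => irrefl_of lt g
  have htr : ∀ {x y z : OneRelatorExample.Γ}, lt x y → lt y z → lt x z :=
    fun h1 h2 => trans_of lt h1 h2
  have htri : ∀ x y : OneRelatorExample.Γ, lt x y ∨ x = y ∨ lt y x :=
    fun x y => trichotomous_of lt x y
  rcases htri GammaNotBiorderableAux.A 1 with h | h | h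
  · -- A < 1 : use the reversed order
    exact GammaNotBiorderableAux.helper_main (fun g h => lt h g) hirr
      (fun h1 h2 => htr h2 h1)
      (fun x y => by
        rcases htri x y with h' | h' | h'
        · exact Or.inr (Or.inr h')
        · exact Or.inr (Or.inl h')
        · exact Or.inl h')
      (fun f g h H => hl f h g H) (fun f g h H => hr f h g H)
      GammaNotBiorderableAux.T GammaNotBiorderableAux.A h GammaNotBiorderableAux.keyrel
  · exact GammaNotBiorderableAux.A_ne_one h
  · exact GammaNotBiorderableAux.helper_main lt hirr @htr htri hl hr
      GammaNotBiorderableAux.T GammaNotBiorderableAux.A h GammaNotBiorderableAux.keyrel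
end

section
/- Let s ≥ 1, m ≥ 2, and let W(x₁, ..., xₛ) be a nontrivial positive word in the free group on x₁, ..., xₛ (a nonempty product of the generators with only positive exponents). In the free group on two letters t, x, set zᵢ = tⁱ x t⁻ⁱ for 0 ≤ i ≤ s+1. Then the one-relator group Γ_W = ⟨t, x | z_s (W(z₀, ..., z_{s−1}) z_{s+1}) z_s⁻¹ = (W(z₀, ..., z_{s−1}) z_{s+1})ᵐ⟩ is not bi-orderable. -/
namespace GammaW

/-- `zgen i = tⁱ x t⁻ⁱ` in the free group on the two generators `t = of true`,
`x = of false`. -/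
def zgen (i : ℕ) : FreeGroup Bool :=
  (FreeGroup.of true) ^ i * FreeGroup.of false * ((FreeGroup.of true) ^ i)⁻¹

/-- The substituted positive word `W(z₀, …, z_{s-1})`, where the positive word `W` in
`x₁, …, xₛ` is encoded by the (nonempty) list `w` of its letters (entry `j : Fin s`
stands for the generator `x_{j+1}`, which is substituted by `z_j`). -/
def Wz {s : ℕ} (w : List (Fin s)) : FreeGroup Bool :=
  (w.map fun j => zgen (j : ℕ)).prod

/-- The relator `z_s (W(z₀,…,z_{s−1}) z_{s+1}) z_s⁻¹ (W(z₀,…,z_{s−1}) z_{s+1})^{−m}`. -/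
def relatorW (s m : ℕ) (w : List (Fin s)) : FreeGroup Bool :=
  zgen s * (Wz w * zgen (s + 1)) * (zgen s)⁻¹ * ((Wz w * zgen (s + 1)) ^ m)⁻¹

/-- The one-relator group `Γ_W`. -/
abbrev ΓW (s m : ℕ) (w : List (Fin s)) : Type :=
  PresentedGroup ({relatorW s m w} : Set (FreeGroup Bool))

end GammaW

/-!
Suppose `<` is a bi-invariant order on `Γ_W`. The generator `x` is nontrivial, since
`t ↦ 0`, `x ↦ 1` defines a map onto `ℤ/(|W| + 1)` killing the relator; so after possibly
reversing the order, `x > 1`. Then every `zᵢ = tⁱ x t⁻ⁱ` is positive, and since conjugation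
by `t` preserves the order, the sequence `(zᵢ)` is monotone or antitone. Put
`U = W(z₀, …, z_{s−1}) z_{s+1}`, a product of positive letters. If `(zᵢ)` increases then
`z_s ≤ z_{s+1} ≤ U`; if it decreases then `z_s ≤ z_j ≤ U` for the first letter `z_j` of `W`,
where `j < s`. But `z_s ≤ U` is impossible for `m ≥ 2`: `U^m = z_s U z_s⁻¹ < z_s U ≤ U²`.
-/

theorem IsBiOrderable.elim {G : Type*} [Group G] (h : IsBiOrderable G) {p : Prop}
    (hp : ∀ [LinearOrder G] [MulLeftMono G] [MulRightMono G], p) : p := by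
  classical
  obtain ⟨lt, hlt, hL, hR⟩ := h
  let _ := linearOrderOfSTO lt
  have : MulLeftStrictMono G := ⟨fun a _ _ h => hL a _ _ h⟩
  have : MulRightStrictMono G := ⟨fun a _ _ h => hR a _ _ h⟩
  exact @hp _ (covariantClass_le_of_lt _ _ _) (covariantClass_le_of_lt _ _ _)

section BiOrdered

variable {G : Type*} [Group G] [LinearOrder G] [MulLeftMono G] [MulRightMono G]

theorem lt_two_of_mul_mul_inv_eq_pow {g u : G} {m : ℕ} (hg : 1 < g) (hgu : g ≤ u)
    (h : g * u * g⁻¹ = u ^ m) : m < 2 := by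
  have hu : 1 < u := hg.trans_le hgu
  refine (pow_lt_pow_iff_right' hu).1 ?_
  calc u ^ m = g * u * g⁻¹ := h.symm
    _ < g * u := mul_lt_of_lt_one_right' _ (inv_lt_one'.2 hg)
    _ ≤ u * u := mul_le_mul_left hgu u
    _ = u ^ 2 := (sq u).symm

theorem one_lt_mul_mul_inv {x : G} (t : G) (hx : 1 < x) : 1 < t * x * t⁻¹ := by
  simpa using mul_lt_mul_left (mul_lt_mul_right hx t) t⁻¹

theorem monotone_or_antitone_conj_pow (t x : G) :
    Monotone (fun n : ℕ => t ^ n * x * (t ^ n)⁻¹) ∨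
      Antitone (fun n : ℕ => t ^ n * x * (t ^ n)⁻¹) := by
  set conj : G → G := fun y => t * y * t⁻¹
  have hconj : Monotone conj := fun _ _ h => mul_le_mul_left (mul_le_mul_right h t) t⁻¹
  have hiter : ∀ n, conj^[n] x = t ^ n * x * (t ^ n)⁻¹ := by
    intro n
    induction n with
    | zero => simp
    | succ n ih => simp only [Function.iterate_succ_apply', ih, conj, pow_succ']; group
  simp only [← hiter]
  rcases le_total x (conj x) with h | h
  · exact Or.inl (hconj.monotone_iterate_of_le_map h)
  · exact Or.inr (hconj.antitone_iterate_of_map_le h)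

end BiOrdered

namespace GammaW

variable {G : Type*} [Group G]

@[simp]
theorem lift_zgen (f : Bool → G) (i : ℕ) :
    FreeGroup.lift f (zgen i) = f true ^ i * f false * (f true ^ i)⁻¹ := by
  simp [zgen]

theorem lift_Wz {s : ℕ} (f : Bool → G) (w : List (Fin s)) :
    FreeGroup.lift f (Wz w) = (w.map fun j => FreeGroup.lift f (zgen j)).prod := by
  rw [Wz, map_list_prod, List.map_map, Function.comp_def]

theorem lift_relatorW_eq_one_iff {s m : ℕ} (f : Bool → G) (w : List (Fin s)) :
    FreeGroup.lift f (relatorW s m w) = 1 ↔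
      FreeGroup.lift f (zgen s) * FreeGroup.lift f (Wz w * zgen (s + 1)) *
          (FreeGroup.lift f (zgen s))⁻¹ = FreeGroup.lift f (Wz w * zgen (s + 1)) ^ m := by
  rw [relatorW, map_mul, map_inv, map_pow, mul_inv_eq_one, map_mul, map_mul, map_inv]

theorem lift_relatorW_ne_one_of_one_lt [LinearOrder G] [MulLeftMono G] [MulRightMono G]
    {s m : ℕ} (hm : 2 ≤ m) {w : List (Fin s)} (hw : w ≠ []) {f : Bool → G}
    (hx : 1 < f false) : FreeGroup.lift f (relatorW s m w) ≠ 1 := by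
  set z : ℕ → G := fun i => f true ^ i * f false * (f true ^ i)⁻¹
  have hz_pos (i : ℕ) : 1 < z i := one_lt_mul_mul_inv _ hx
  have hprod_pos (l : List (Fin s)) : 1 ≤ (l.map fun j => z j).prod :=
    List.one_le_prod_of_one_le (by simpa using fun (j : Fin s) _ => (hz_pos j).le)
  have hzs_le : z s ≤ (w.map fun j => z j).prod * z (s + 1) := by
    rcases monotone_or_antitone_conj_pow (f true) (f false) with hmono | hanti
    · calc z s ≤ z (s + 1) := hmono s.le_succ
        _ ≤ _ := le_mul_of_one_le_left' (hprod_pos w)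
    · obtain ⟨j, w', rfl⟩ := List.exists_cons_of_ne_nil hw
      calc z s ≤ z j := hanti j.isLt.le
        _ ≤ z j * (w'.map fun j => z j).prod := le_mul_of_one_le_right' (hprod_pos w')
        _ ≤ _ := le_mul_of_one_le_right' (hz_pos _).le
  intro h
  rw [lift_relatorW_eq_one_iff, map_mul, lift_Wz] at h
  simp only [lift_zgen] at h
  exact absurd (lt_two_of_mul_mul_inv_eq_pow (hz_pos s) hzs_le h) (by omega)

theorem lift_relatorW_ne_one [LinearOrder G] [MulLeftMono G] [MulRightMono G]
    {s m : ℕ} (hm : 2 ≤ m) {w : List (Fin s)} (hw : w ≠ []) {f : Bool → G}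
    (hx : f false ≠ 1) : FreeGroup.lift f (relatorW s m w) ≠ 1 := by
  rcases hx.lt_or_gt with hx | hx
  · exact lift_relatorW_ne_one_of_one_lt (G := Gᵒᵈ) hm hw hx
  · exact lift_relatorW_ne_one_of_one_lt hm hw hx

theorem lift_relatorW_eq_one_of_pow_eq_one {s m : ℕ} (w : List (Fin s)) {a : G}
    (ha : a ^ (w.length + 1) = 1) :
    FreeGroup.lift (fun b => cond b 1 a) (relatorW s m w) = 1 := by
  rw [lift_relatorW_eq_one_iff, map_mul, lift_Wz]
  simp [ha, ← pow_succ]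

theorem of_false_ne_one {s m : ℕ} {w : List (Fin s)} (hw : w ≠ []) :
    (PresentedGroup.of false : ΓW s m w) ≠ 1 := by
  have : Fact (1 < w.length + 1) := ⟨by simpa [List.length_pos_iff] using hw⟩
  set a : Multiplicative (ZMod (w.length + 1)) := .ofAdd 1
  have ha : a ^ (w.length + 1) = 1 := by
    rw [← ofAdd_nsmul, nsmul_one, ZMod.natCast_self]
    rfl
  have hrels : ∀ r ∈ ({relatorW s m w} : Set (FreeGroup Bool)),
      FreeGroup.lift (fun b => cond b 1 a) r = 1 := by
    rintro r rfl
    exact lift_relatorW_eq_one_of_pow_eq_one w ha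
  intro h
  have h' := congrArg (PresentedGroup.toGroup hrels) h
  rw [PresentedGroup.toGroup.of, map_one] at h'
  exact one_ne_zero (ofAdd_eq_one.1 h' : (1 : ZMod (w.length + 1)) = 0)

theorem lift_of_relatorW {s m : ℕ} (w : List (Fin s)) :
    FreeGroup.lift (PresentedGroup.of : Bool → ΓW s m w) (relatorW s m w) = 1 := by
  rw [← FreeGroup.lift_unique (f := PresentedGroup.of) (PresentedGroup.mk _) fun _ => rfl]
  exact PresentedGroup.one_of_mem rfl

end GammaW

theorem gammaW_not_biorderable_general (s m : ℕ) (hm : 2 ≤ m)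
    (w : List (Fin s)) (hw : w ≠ []) :
    ¬ IsBiOrderable (GammaW.ΓW s m w) := fun h =>
  h.elim <| GammaW.lift_relatorW_ne_one hm hw (GammaW.of_false_ne_one hw)
    (GammaW.lift_of_relatorW w)

/-- For `s ≥ 1`, `m ≥ 2` and every nontrivial positive word `W` (encoded by the nonempty
list `w` of its letters), the one-relator group `Γ_W` is not bi-orderable. -/
theorem gammaW_not_biorderable (s m : ℕ) (hs : 1 ≤ s) (hm : 2 ≤ m)
    (w : List (Fin s)) (hw : w ≠ []) :
    ¬ IsBiOrderable (GammaW.ΓW s m w) :=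
  gammaW_not_biorderable_general s m hm w hw
end

section
/- Let A, B, C be groups with monomorphisms φ : C → A and ψ : C → B, and let G = A ∗_C B be the amalgamated free product with respect to these monomorphisms. Let T_A = A ∖ φ(C) and T_B = B ∖ ψ(C). Suppose w = g₀ g₁ ⋯ gₙ with n ≥ 1, where each gᵢ lies in (the canonical image in G of) A or B, and for all 1 ≤ i ≤ n: if gᵢ₋₁ ∈ A then gᵢ ∈ T_B, and if gᵢ₋₁ ∈ B then gᵢ ∈ T_A. Then w ≠ 1 in A ∗_C B. -/
/-!
By the normal form theorem for amalgamated products (`PushoutI.Reduced.eq_empty_of_mem_range`),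
a nonempty word whose letters alternate between the factors and avoid the amalgamated subgroup
never multiplies to an element of that subgroup. The hypotheses make the word of this form except
possibly for its first letter; if that letter is some `c` in the subgroup, the product can only be
`1` if the reduced tail multiplies to `c⁻¹`.
-/

namespace Monoid.PushoutI

variable {ι : Type*} {G : ι → Type*} {H : Type*} [∀ i, Group (G i)] [Group H]
  {φ : ∀ i, H →* G i}

theorem prod_map_notMem_base_range (hφ : ∀ i, Function.Injective (φ i))
    {l : List (Σ i, G i)} (hne : l ≠ [])
    (hchain : l.IsChain fun p q => p.1 ≠ q.1) (hl : ∀ p ∈ l, p.2 ∉ (φ p.1).range) :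
    (l.map fun p => of (φ := φ) p.1 p.2).prod ∉ (base φ).range := by
  intro hmem
  let w : CoprodI.Word G := ⟨l, fun p hp h1 => hl p hp (h1 ▸ one_mem _), hchain⟩
  have hprod : ofCoprodI (φ := φ) w.prod = (l.map fun p => of (φ := φ) p.1 p.2).prod := by
    simp only [CoprodI.Word.prod, map_list_prod, List.map_map]
    exact congrArg List.prod (List.map_congr_left fun p _ => ofCoprodI_of p.1 p.2)
  have hw : w = .empty := Reduced.eq_empty_of_mem_range hφ hl (hprod ▸ hmem)
  exact hne (congrArg CoprodI.Word.toList hw)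

theorem prod_map_cons_ne_one (hφ : ∀ i, Function.Injective (φ i))
    (p : Σ i, G i) {l : List (Σ i, G i)} (hne : l ≠ [])
    (hchain : (p :: l).IsChain fun p q => p.1 ≠ q.1) (hl : ∀ q ∈ l, q.2 ∉ (φ q.1).range) :
    ((p :: l).map fun q => of (φ := φ) q.1 q.2).prod ≠ 1 := by
  by_cases hp : p.2 ∈ (φ p.1).range
  · obtain ⟨c, hc⟩ := hp
    rw [List.map_cons, List.prod_cons, ← hc, of_apply_eq_base]
    intro h
    exact prod_map_notMem_base_range hφ hne hchain.tail hl
      ⟨c⁻¹, by rw [map_inv]; exact inv_eq_of_mul_eq_one_right h⟩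
  · exact fun h => prod_map_notMem_base_range hφ (List.cons_ne_nil p l) hchain
      (List.forall_mem_cons.2 ⟨hp, hl⟩) (h ▸ one_mem _)

theorem prod_ofFn_ne_one (hφ : ∀ i, Function.Injective (φ i)) {n : ℕ} (hn : 1 ≤ n)
    (s : Fin (n + 1) → ι) (hs : ∀ i : Fin n, s i.castSucc ≠ s i.succ)
    (g : Fin (n + 1) → PushoutI φ) (h0 : g 0 ∈ Set.range (of (s 0)))
    (hg : ∀ i : Fin n, g i.succ ∈ of (s i.succ) '' (Set.range (φ (s i.succ)))ᶜ) :
    (List.ofFn g).prod ≠ 1 := by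
  have hrange : ∀ i, g i ∈ Set.range (of (s i)) :=
    Fin.cases h0 fun i => Set.image_subset_range _ _ (hg i)
  choose a ha using hrange
  have hletters : ∀ i : Fin n, a i.succ ∉ (φ (s i.succ)).range := by
    intro i hmem
    obtain ⟨x, hx, hxg⟩ := hg i
    exact hx (of_injective hφ _ (hxg.trans (ha i.succ).symm) ▸ hmem)
  have hword : List.ofFn g = (List.ofFn fun i => (⟨s i, a i⟩ : Σ i, G i)).map
      fun p => of (φ := φ) p.1 p.2 := by
    simp only [List.map_ofFn, Function.comp_def, ha]
  have hchain : (List.ofFn fun i => (⟨s i, a i⟩ : Σ i, G i)).IsChain fun p q => p.1 ≠ q.1 :=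
    List.isChain_ofFn.2 fun i hi => hs ⟨i, by omega⟩
  rw [hword, List.ofFn_succ]
  rw [List.ofFn_succ] at hchain
  refine prod_map_cons_ne_one hφ _ ?_ hchain ?_
  · simpa using Nat.one_le_iff_ne_zero.mp hn
  · simpa [List.mem_ofFn] using hletters

end Monoid.PushoutI

open Monoid

/-- (Britton's Lemma analogue for amalgamated free products.)
Let `A = Gf true` and `B = Gf false` be groups with monomorphisms `φ true : C → A`,
`φ false : C → B`, and let `G = A ∗_C B` be the amalgamated free product (the pushout
`Monoid.PushoutI φ`).  Suppose `w = g₀ g₁ ⋯ gₙ` with `n ≥ 1`, where `g₀` lies in the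
canonical image of `A` or of `B`, and for all `1 ≤ i ≤ n`: if `g_{i-1}` lies in the image
of `A` then `gᵢ` lies in the image of `T_B = B \ (φ false)(C)`, and if `g_{i-1}` lies in
the image of `B` then `gᵢ` lies in the image of `T_A = A \ (φ true)(C)`.
Then `w ≠ 1` in `A ∗_C B`. -/
theorem amalgam_reduced_word_ne_one {C : Type*} [Group C]
    {Gf : Bool → Type*} [∀ b, Group (Gf b)]
    (φ : ∀ b, C →* Gf b) (hφ : ∀ b, Function.Injective (φ b))
    (n : ℕ) (hn : 1 ≤ n) (g : Fin (n + 1) → PushoutI φ)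
    (h0 : g 0 ∈ Set.range (PushoutI.of (φ := φ) true) ∪
      Set.range (PushoutI.of (φ := φ) false))
    (hstep : ∀ i : Fin n,
      (g i.castSucc ∈ Set.range (PushoutI.of (φ := φ) true) →
        g i.succ ∈ (PushoutI.of (φ := φ) false) '' (Set.range (φ false))ᶜ) ∧
      (g i.castSucc ∈ Set.range (PushoutI.of (φ := φ) false) →
        g i.succ ∈ (PushoutI.of (φ := φ) true) '' (Set.range (φ true))ᶜ)) :
    (List.ofFn g).prod ≠ 1 := by
  obtain ⟨b₀, hb₀⟩ : ∃ b₀, g 0 ∈ Set.range (PushoutI.of (φ := φ) b₀) :=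
    h0.elim (⟨true, ·⟩) (⟨false, ·⟩)
  let side : Fin (n + 1) → Bool := fun i => (!·)^[i] b₀
  have hside : ∀ i : Fin n, side i.succ = !side i.castSucc := fun i =>
    Function.iterate_succ_apply' _ _ _
  have hnext : ∀ i : Fin n, g i.castSucc ∈ Set.range (PushoutI.of (side i.castSucc)) →
      g i.succ ∈ PushoutI.of (side i.succ) '' (Set.range (φ (side i.succ)))ᶜ := by
    intro i
    rw [hside i]
    cases side i.castSucc
    exacts [(hstep i).2, (hstep i).1]
  have hrange : ∀ i, g i ∈ Set.range (PushoutI.of (side i)) :=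
    Fin.induction hb₀ fun i hi => Set.image_subset_range _ _ (hnext i hi)
  refine PushoutI.prod_ofFn_ne_one hφ hn side (fun i => ?_) g hb₀
    fun i => hnext i (hrange _)
  rw [hside i]
  exact (Bool.not_ne_self _).symm
end

section
/- Let G be a bi-orderable group and let t, a ∈ G. Set b = t a t⁻¹ and c = t² a t⁻². If b (a c) b⁻¹ = (a c)², then a = 1. -/
section BiInvariantOrder

variable {G : Type*} [Group G] [Preorder G] [MulLeftStrictMono G] [MulRightStrictMono G]

theorem one_lt_conj {g : G} (f : G) (hg : 1 < g) : 1 < f * g * f⁻¹ := by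
  simpa using mul_lt_mul_left (mul_lt_mul_right hg f) f⁻¹

theorem lt_of_mul_mul_inv_eq_sq {u x : G} (h : u * x * u⁻¹ = x ^ 2) (hu : 1 < u) : x < u := by
  have hconj : x * u * x⁻¹ = x⁻¹ * u := by
    calc x * u * x⁻¹ = x⁻¹ * (u * x * u⁻¹) * u * x⁻¹ := by rw [h]; group
      _ = x⁻¹ * u := by group
  exact lt_inv_mul_iff_lt.mp (hconj ▸ one_lt_conj x hu)

theorem not_one_lt_of_conj_mul_conj_sq {t a b c : G} (hb : b = t * a * t⁻¹)
    (hc : c = t ^ 2 * a * (t ^ 2)⁻¹) (h : b * (a * c) * b⁻¹ = (a * c) ^ 2) : ¬ 1 < a := by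
  intro ha
  set d := t⁻¹ * a * t
  have hconj_b : MulAut.conj t⁻¹ b = a := by simp only [hb, MulAut.conj_apply]; group
  have hconj_a : MulAut.conj t⁻¹ a = d := by simp only [d, MulAut.conj_apply, inv_inv]
  have hconj_c : MulAut.conj t⁻¹ c = b := by simp only [hb, hc, pow_two, MulAut.conj_apply]; group
  have h' : a * (d * b) * a⁻¹ = (d * b) ^ 2 := by
    simpa only [map_mul (MulAut.conj t⁻¹), map_inv (MulAut.conj t⁻¹), map_pow (MulAut.conj t⁻¹),
      hconj_a, hconj_b, hconj_c] using congrArg (MulAut.conj t⁻¹) h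
  have hac_lt_b : a * c < b := lt_of_mul_mul_inv_eq_sq h (hb ▸ one_lt_conj t ha)
  have hdb_lt_a : d * b < a := lt_of_mul_mul_inv_eq_sq h' ha
  have ha_lt_ac : a < a * c := lt_mul_of_one_lt_right' a (hc ▸ one_lt_conj (t ^ 2) ha)
  have hb_lt_db : b < d * b := lt_mul_of_one_lt_left' b (by simpa using one_lt_conj t⁻¹ ha)
  exact lt_irrefl a (ha_lt_ac.trans (hac_lt_b.trans (hb_lt_db.trans hdb_lt_a)))

end BiInvariantOrder

/-- In a bi-orderable group, if `b = t a t⁻¹`, `c = t² a t⁻²` and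
`b (a c) b⁻¹ = (a c)²`, then `a = 1`. -/
theorem eq_one_of_biorderable {G : Type*} [Group G] (hG : IsBiOrderable G) (t a b c : G)
    (hb : b = t * a * t⁻¹) (hc : c = t ^ 2 * a * (t ^ 2)⁻¹)
    (h : b * (a * c) * b⁻¹ = (a * c) ^ 2) : a = 1 := by
  classical
  obtain ⟨r, hr, hL, hR⟩ := hG
  let := linearOrderOfSTO r
  have : MulLeftStrictMono G := ⟨fun f _ _ => hL f _ _⟩
  have : MulRightStrictMono G := ⟨fun f _ _ => hR f _ _⟩
  have ha_le : a ≤ 1 := not_lt.mp (not_one_lt_of_conj_mul_conj_sq hb hc h)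
  have ha_ge : 1 ≤ a := not_lt.mp (not_one_lt_of_conj_mul_conj_sq (G := Gᵒᵈ) hb hc h)
  exact le_antisymm ha_le ha_ge
end

section
/- Let H be the group with presentation ⟨aₙ (n ∈ ℤ) | a_{n+1}(aₙ a_{n+2}) a_{n+1}⁻¹ = (aₙ a_{n+2})² for all n ∈ ℤ⟩. There is an automorphism σ of H with σ(aₙ) = a_{n+1} for all n ∈ ℤ, and the one-relator group Γ = ⟨t, a | (t a t⁻¹)(a t² a t⁻²)(t a t⁻¹)⁻¹ = (a t² a t⁻²)²⟩ is isomorphic to the semidirect product H ⋊ ℤ in which the generator of ℤ acts by σ, via an isomorphism sending a to a₀ and t to the generator of the ℤ-factor. -/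
namespace GammaSemidirect

/-- The relators `a_{n+1} (aₙ a_{n+2}) a_{n+1}⁻¹ ((aₙ a_{n+2})²)⁻¹`, `n ∈ ℤ`, on the
generators `aₙ`, `n ∈ ℤ`. -/
def Hrels : Set (FreeGroup ℤ) :=
  {r | ∃ n : ℤ, r = FreeGroup.of (n + 1) * (FreeGroup.of n * FreeGroup.of (n + 2)) *
    (FreeGroup.of (n + 1))⁻¹ * ((FreeGroup.of n * FreeGroup.of (n + 2)) ^ 2)⁻¹}

/-- `H = ⟨aₙ (n ∈ ℤ) | a_{n+1}(aₙ a_{n+2})a_{n+1}⁻¹ = (aₙ a_{n+2})² for all n ∈ ℤ⟩`. -/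
abbrev H : Type := PresentedGroup Hrels

/-- `t` as an element of the free group on two generators `{t, a}`. -/
def t : FreeGroup Bool := FreeGroup.of true

/-- `a` as an element of the free group on two generators `{t, a}`. -/
def a : FreeGroup Bool := FreeGroup.of false

/-- The relator `(t a t⁻¹)(a t² a t⁻²)(t a t⁻¹)⁻¹ ((a t² a t⁻²)²)⁻¹`. -/
def relator : FreeGroup Bool :=
  (t * a * t⁻¹) * (a * t ^ 2 * a * (t ^ 2)⁻¹) * (t * a * t⁻¹)⁻¹ *
    ((a * t ^ 2 * a * (t ^ 2)⁻¹) ^ 2)⁻¹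

/-- The one-relator group `Γ = ⟨t, a | (t a t⁻¹)(a t² a t⁻²)(t a t⁻¹)⁻¹ = (a t² a t⁻²)²⟩`. -/
abbrev Γ : Type := PresentedGroup ({relator} : Set (FreeGroup Bool))

end GammaSemidirect

/-!
Put `aₙ = tⁿ a t⁻ⁿ` in `Γ`. Conjugation by `tⁿ` carries the relator of `Γ`, which reads
`a₁ (a₀ a₂) a₁⁻¹ = (a₀ a₂)²`, to the `n`-th relator of `H`; hence `aₙ ↦ tⁿ a t⁻ⁿ`, `t ↦ t`
defines a map `H ⋊ ℤ → Γ`. Conversely, in `H ⋊ ℤ` conjugation by the generator of `ℤ` acts as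
the shift `σ`, so the relator of `Γ` evaluated at `a ↦ a₀`, `t ↦ t` is the `0`-th relator of
`H`. The two maps are inverse to each other on generators.
-/

namespace GammaSemidirect

open SemidirectProduct

section relWord

variable {G G' F : Type*} [Group G] [Group G'] [FunLike F G G'] [MonoidHomClass F G G']

def relWord (x y z : G) : G := y * (x * z) * y⁻¹ * ((x * z) ^ 2)⁻¹

theorem map_relWord (f : F) (x y z : G) :
    f (relWord x y z) = relWord (f x) (f y) (f z) := by
  simp only [relWord, map_mul, map_inv, map_pow]

theorem map_conj_apply (f : F) (g x : G) :
    f (MulAut.conj g x) = MulAut.conj (f g) (f x) := by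
  simp only [MulAut.conj_apply, map_mul, map_inv]

theorem relWord_conj_zpow_eq_one {T A : G}
    (h : relWord A (MulAut.conj T A) (MulAut.conj (T ^ 2) A) = 1) (n : ℤ) :
    relWord (MulAut.conj (T ^ n) A) (MulAut.conj (T ^ (n + 1)) A)
      (MulAut.conj (T ^ (n + 2)) A) = 1 := by
  have hconj (k : ℤ) :
      MulAut.conj (T ^ (n + k)) A = MulAut.conj (T ^ n) (MulAut.conj (T ^ k) A) := by
    rw [zpow_add, map_mul, MulAut.mul_apply]
  rw [hconj 1, hconj 2, zpow_one, zpow_two, ← pow_two, ← map_relWord, h, map_one]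

end relWord

theorem _root_.MulAut.zpow_apply_eq_of_apply_eq {G : Type*} [Group G] (σ : MulAut G) (x : ℤ → G)
    (h : ∀ n, σ (x n) = x (n + 1)) (k n : ℤ) : (σ ^ k) (x n) = x (n + k) := by
  induction k using Int.induction_on generalizing n with
  | zero => simp
  | succ k ih => rw [zpow_add_one, MulAut.mul_apply, h, ih, add_right_comm, add_assoc]
  | pred k ih =>
    have hinv : σ⁻¹ (x n) = x (n - 1) := by
      rw [MulAut.inv_apply, MulEquiv.symm_apply_eq, h, sub_add_cancel]
    rw [zpow_sub_one, MulAut.mul_apply, hinv, ih, sub_add_eq_add_sub, add_sub_assoc]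

theorem relWord_of_eq_one (n : ℤ) :
    relWord (PresentedGroup.of n) (PresentedGroup.of (n + 1)) (PresentedGroup.of (n + 2)) =
      (1 : H) :=
  (map_relWord _ _ _ _).symm.trans (PresentedGroup.one_of_mem ⟨n, rfl⟩)

theorem relator_eq_relWord : relator = relWord a (MulAut.conj t a) (MulAut.conj (t ^ 2) a) := by
  simp only [relator, relWord, MulAut.conj_apply, mul_assoc]

theorem relWord_of_false_eq_one :
    relWord (PresentedGroup.of false)
      (MulAut.conj (PresentedGroup.of true) (PresentedGroup.of false))
      (MulAut.conj (PresentedGroup.of true ^ 2) (PresentedGroup.of false)) = (1 : Γ) := by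
  have h := PresentedGroup.one_of_mem (rels := ({relator} : Set (FreeGroup Bool))) rfl
  rwa [relator_eq_relWord, map_relWord, map_conj_apply, map_conj_apply, map_pow] at h

def liftH {G : Type*} [Group G] (f : ℤ → G)
    (hf : ∀ n, relWord (f n) (f (n + 1)) (f (n + 2)) = 1) : H →* G :=
  PresentedGroup.toGroup (f := f) <| by
    rintro _ ⟨n, rfl⟩
    simpa only [relWord, map_mul, map_inv, map_pow, FreeGroup.lift_apply_of] using hf n

@[simp]
theorem liftH_of {G : Type*} [Group G] (f : ℤ → G)
    (hf : ∀ n, relWord (f n) (f (n + 1)) (f (n + 2)) = 1) (n : ℤ) :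
    liftH f hf (PresentedGroup.of n) = f n :=
  PresentedGroup.toGroup.of _

def liftΓ {G : Type*} [Group G] (T A : G)
    (h : relWord A (MulAut.conj T A) (MulAut.conj (T ^ 2) A) = 1) : Γ →* G :=
  PresentedGroup.toGroup (f := fun b => if b then T else A) <| by
    rintro _ rfl
    rw [relator_eq_relWord, map_relWord, map_conj_apply, map_conj_apply, map_pow]
    simpa only [t, a, FreeGroup.lift_apply_of, if_true, Bool.false_eq_true, if_false] using h

theorem liftΓ_of_true {G : Type*} [Group G] (T A : G)
    (h : relWord A (MulAut.conj T A) (MulAut.conj (T ^ 2) A) = 1) :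
    liftΓ T A h (PresentedGroup.of true) = T :=
  PresentedGroup.toGroup.of _

theorem liftΓ_of_false {G : Type*} [Group G] (T A : G)
    (h : relWord A (MulAut.conj T A) (MulAut.conj (T ^ 2) A) = 1) :
    liftΓ T A h (PresentedGroup.of false) = A :=
  PresentedGroup.toGroup.of _

def shift (k : ℤ) : H →* H :=
  liftH (fun n => PresentedGroup.of (n + k)) fun n => by
    rw [add_right_comm n 1 k, add_right_comm n 2 k]
    exact relWord_of_eq_one (n + k)

@[simp]
theorem shift_of (k n : ℤ) : shift k (PresentedGroup.of n) = PresentedGroup.of (n + k) :=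
  liftH_of _ _ n

def shiftAut : MulAut H :=
  (shift 1).toMulEquiv (shift (-1)) (by ext; simp) (by ext; simp)

theorem shiftAut_of (n : ℤ) : shiftAut (PresentedGroup.of n) = PresentedGroup.of (n + 1) :=
  shift_of 1 n

theorem zpowersHom_shiftAut_of (g : Multiplicative ℤ) (n : ℤ) :
    zpowersHom (MulAut H) shiftAut g (PresentedGroup.of n) = PresentedGroup.of (n + g.toAdd) :=
  MulAut.zpow_apply_eq_of_apply_eq shiftAut PresentedGroup.of shiftAut_of _ _

theorem _root_.SemidirectProduct.conj_inr_inl {N G : Type*} [Group N] [Group G]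
    {φ : G →* MulAut N} (g : G) (n : N) :
    MulAut.conj (inr g : N ⋊[φ] G) (inl n) = inl (φ g n) := by
  rw [MulAut.conj_apply, inl_aut, map_inv]

abbrev HZ : Type := H ⋊[zpowersHom (MulAut H) shiftAut] Multiplicative ℤ

theorem conj_zpow_inr_inl_of (k n : ℤ) :
    MulAut.conj (inr (Multiplicative.ofAdd 1) ^ k : HZ) (inl (PresentedGroup.of n)) =
      inl (PresentedGroup.of (n + k)) := by
  rw [← map_zpow, conj_inr_inl, zpowersHom_shiftAut_of]
  simp

def toSemidirect : Γ →* HZ :=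
  liftΓ (inr (Multiplicative.ofAdd 1)) (inl (PresentedGroup.of 0)) <| by
    have h := congrArg (inl (φ := zpowersHom (MulAut H) shiftAut)) (relWord_of_eq_one 0)
    rwa [map_relWord, map_one, ← conj_zpow_inr_inl_of, ← conj_zpow_inr_inl_of, zpow_one,
      zpow_ofNat] at h

def ofSemidirect : HZ →* Γ :=
  lift (liftH (fun n => MulAut.conj (PresentedGroup.of true ^ n) (PresentedGroup.of false))
      (relWord_conj_zpow_eq_one relWord_of_false_eq_one))
    (zpowersHom Γ (PresentedGroup.of true)) fun g => by
      ext n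
      simp only [MonoidHom.comp_apply, MulEquiv.coe_toMonoidHom]
      rw [zpowersHom_shiftAut_of, liftH_of, liftH_of, zpowersHom_apply, add_comm, zpow_add,
        map_mul, MulAut.mul_apply]

@[simp]
theorem toSemidirect_of_true :
    toSemidirect (PresentedGroup.of true) = inr (Multiplicative.ofAdd 1) :=
  liftΓ_of_true _ _ _

@[simp]
theorem toSemidirect_of_false :
    toSemidirect (PresentedGroup.of false) = inl (PresentedGroup.of 0) :=
  liftΓ_of_false _ _ _

theorem ofSemidirect_inl_of (n : ℤ) :
    ofSemidirect (inl (PresentedGroup.of n)) =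
      MulAut.conj (PresentedGroup.of true ^ n) (PresentedGroup.of false) := by
  rw [ofSemidirect, lift_inl, liftH_of]

@[simp]
theorem ofSemidirect_inr (g : Multiplicative ℤ) :
    ofSemidirect (inr g) = PresentedGroup.of true ^ g.toAdd := by
  rw [ofSemidirect, lift_inr, zpowersHom_apply]

theorem ofSemidirect_comp_toSemidirect : ofSemidirect.comp toSemidirect = MonoidHom.id Γ := by
  ext (_ | _)
  · simp [ofSemidirect_inl_of]
  · simp

theorem toSemidirect_comp_ofSemidirect : toSemidirect.comp ofSemidirect = MonoidHom.id HZ := by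
  refine hom_ext (PresentedGroup.ext fun n => ?_) (MonoidHom.ext_mint ?_)
  · rw [MonoidHom.comp_apply, MonoidHom.comp_apply, MonoidHom.comp_apply, ofSemidirect_inl_of,
      map_conj_apply, map_zpow, toSemidirect_of_true, toSemidirect_of_false,
      conj_zpow_inr_inl_of, zero_add, MonoidHom.id_apply]
  · simp

end GammaSemidirect

open GammaSemidirect in
/-- There is an automorphism `σ` of `H` shifting the generators, `σ(aₙ) = a_{n+1}`, and
`Γ` is isomorphic to the semidirect product `H ⋊ ℤ` in which the generator of `ℤ` acts by
`σ`, via an isomorphism sending `a` to `a₀` and `t` to the generator of the `ℤ`-factor. -/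
theorem gamma_iso_semidirect :
    ∃ σ : MulAut H, (∀ n : ℤ, σ (PresentedGroup.of n) = PresentedGroup.of (n + 1)) ∧
      ∃ e : Γ ≃* H ⋊[zpowersHom (MulAut H) σ] Multiplicative ℤ,
        e (PresentedGroup.of false) = SemidirectProduct.inl (PresentedGroup.of (0 : ℤ)) ∧
        e (PresentedGroup.of true) = SemidirectProduct.inr (Multiplicative.ofAdd 1) :=
  ⟨shiftAut, shiftAut_of,
    toSemidirect.toMulEquiv ofSemidirect ofSemidirect_comp_toSemidirect
      toSemidirect_comp_ofSemidirect,
    toSemidirect_of_false, toSemidirect_of_true⟩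
end

section
/- Let H be the group with presentation ⟨aₙ (n ∈ ℤ) | a_{n+1}(aₙ a_{n+2}) a_{n+1}⁻¹ = (aₙ a_{n+2})² for all n ∈ ℤ⟩, and for n ≥ 2 let c = a_{n−1} and x = a_{n−2} a_n in H. Then the homomorphism from the Baumslag–Solitar group BS(1,2) = ⟨α, β | α β α⁻¹ = β²⟩ to H sending α to c and β to x is injective; in particular, the subgroup of H generated by c and x is isomorphic to BS(1,2). -/
namespace BSinH

/-- The relators `a_{n+1} (aₙ a_{n+2}) a_{n+1}⁻¹ ((aₙ a_{n+2})²)⁻¹`, `n ∈ ℤ`, on the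
generators `aₙ`, `n ∈ ℤ`. -/
def Hrels : Set (FreeGroup ℤ) :=
  {r | ∃ n : ℤ, r = FreeGroup.of (n + 1) * (FreeGroup.of n * FreeGroup.of (n + 2)) *
    (FreeGroup.of (n + 1))⁻¹ * ((FreeGroup.of n * FreeGroup.of (n + 2)) ^ 2)⁻¹}

/-- `H = ⟨aₙ (n ∈ ℤ) | a_{n+1}(aₙ a_{n+2})a_{n+1}⁻¹ = (aₙ a_{n+2})² for all n ∈ ℤ⟩`. -/
abbrev H : Type := PresentedGroup Hrels

/-- The single relator `α β α⁻¹ β⁻²` of the Baumslag–Solitar group `BS(1,2)`, with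
`α = of true` and `β = of false`. -/
def bsRels : Set (FreeGroup Bool) :=
  {FreeGroup.of true * FreeGroup.of false * (FreeGroup.of true)⁻¹ *
    ((FreeGroup.of false) ^ 2)⁻¹}

/-- The Baumslag–Solitar group `BS(1,2) = ⟨α, β | α β α⁻¹ = β²⟩`. -/
abbrev BS : Type := PresentedGroup bsRels

end BSinH

/-!
The map `BS(1,2) → H`, `α ↦ a_{n-1}`, `β ↦ a_{n-2} aₙ`, has a left inverse `H → BS(1,2)`.
It sends `a_{n+j}` to `φ j`, where the odd positions carry `α, α⁻¹, α, …` alternately, the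
even positions `≥ n` carry `1`, and the even positions `< n` carry `β, β⁻¹, β, …` alternately
going downwards. Then `φ m φ (m + 2) = 1` for every `m ≠ -2`, so all defining relations of `H`
hold trivially except the one at `m = n - 2`, which becomes `α β α⁻¹ = β²`.
-/

namespace BSinH

open PresentedGroup

variable {G : Type*} [Group G]

def IsHRelSeq (g : ℤ → G) : Prop :=
  ∀ m, g (m + 1) * (g m * g (m + 2)) * (g (m + 1))⁻¹ = (g m * g (m + 2)) ^ 2

lemma IsHRelSeq.comp_sub {g : ℤ → G} (hg : IsHRelSeq g) (t : ℤ) :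
    IsHRelSeq (fun k => g (k - t)) := by
  intro m
  simpa only [sub_add_eq_add_sub] using hg (m - t)

lemma isHRelSeq_of_mul_add_two {g : ℤ → G} {m₀ : ℤ}
    (h₀ : g (m₀ + 1) * (g m₀ * g (m₀ + 2)) * (g (m₀ + 1))⁻¹ = (g m₀ * g (m₀ + 2)) ^ 2)
    (h : ∀ m ≠ m₀, g m * g (m + 2) = 1) : IsHRelSeq g := by
  intro m
  rcases eq_or_ne m m₀ with rfl | hm
  · exact h₀
  · simp [h m hm]

lemma H.lift_rels {g : ℤ → G} (hg : IsHRelSeq g) : ∀ r ∈ Hrels, FreeGroup.lift g r = 1 := by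
  rintro r ⟨m, rfl⟩
  simpa only [map_mul, map_inv, map_pow, FreeGroup.lift_apply_of, mul_inv_eq_one] using hg m

def H.lift {g : ℤ → G} (hg : IsHRelSeq g) : H →* G :=
  toGroup (H.lift_rels hg)

@[simp]
lemma H.lift_of {g : ℤ → G} (hg : IsHRelSeq g) (k : ℤ) : H.lift hg (of k) = g k :=
  toGroup.of _

lemma H.isHRelSeq_of : IsHRelSeq (of : ℤ → H) := by
  intro m
  have h := one_of_mem (rels := Hrels) ⟨m, rfl⟩
  simp only [map_mul, map_inv, map_pow, mul_inv_eq_one] at h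
  exact h

lemma BS.lift_rels {a b : G} (h : a * b * a⁻¹ = b ^ 2) :
    ∀ r ∈ bsRels, FreeGroup.lift (fun i : Bool => if i then a else b) r = 1 := by
  rintro r rfl
  simpa [mul_inv_eq_one] using h

def BS.lift {a b : G} (h : a * b * a⁻¹ = b ^ 2) : BS →* G :=
  toGroup (BS.lift_rels h)

@[simp]
lemma BS.lift_of_true {a b : G} (h : a * b * a⁻¹ = b ^ 2) : BS.lift h (of true) = a :=
  toGroup.of _

@[simp]
lemma BS.lift_of_false {a b : G} (h : a * b * a⁻¹ = b ^ 2) : BS.lift h (of false) = b :=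
  toGroup.of _

lemma BS.range_lift {a b : G} (h : a * b * a⁻¹ = b ^ 2) :
    (BS.lift h).range = Subgroup.closure {a, b} := by
  rw [MonoidHom.range_eq_map, ← closure_range_of, MonoidHom.map_closure, ← Set.range_comp]
  congr 1
  ext y
  simp [Function.comp_def, or_comm, eq_comm]

lemma BS.rel : (of true : BS) * of false * (of true)⁻¹ = of false ^ 2 := by
  have h := one_of_mem (rels := bsRels) rfl
  simp only [map_mul, map_inv, map_pow, mul_inv_eq_one] at h
  exact h

def altPow (g : G) (i : ℤ) : G :=
  g ^ (i.negOnePow : ℤ)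

@[simp]
lemma altPow_zero (g : G) : altPow g 0 = g := by
  simp [altPow]

lemma altPow_mul_altPow_add_one (g : G) (i : ℤ) : altPow g i * altPow g (i + 1) = 1 := by
  simp [altPow, Int.negOnePow_succ]

/-- The image of `a_{n+j}` under the retraction `H → BS(1,2)`. -/
def retractionSeq (j : ℤ) : BS :=
  if j % 2 = 1 then altPow (of true) (j / 2 + 1)
  else if 0 ≤ j / 2 then 1 else altPow (of false) (j / 2 + 1)

lemma retractionSeq_neg_one : retractionSeq (-1) = of true := by
  simp [retractionSeq]

lemma retractionSeq_neg_two : retractionSeq (-2) = of false := by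
  simp [retractionSeq]

lemma retractionSeq_zero : retractionSeq 0 = 1 := by
  simp [retractionSeq]

lemma retractionSeq_mul_add_two {j : ℤ} (hj : j ≠ -2) :
    retractionSeq j * retractionSeq (j + 2) = 1 := by
  have hdiv : (j + 2) / 2 = j / 2 + 1 := by omega
  have hmod : (j + 2) % 2 = j % 2 := by omega
  unfold retractionSeq
  rw [hdiv, hmod]
  split_ifs <;> first | exact altPow_mul_altPow_add_one _ _ | omega | simp

lemma isHRelSeq_retractionSeq : IsHRelSeq retractionSeq := by
  refine isHRelSeq_of_mul_add_two (m₀ := -2) ?_ fun j hj => retractionSeq_mul_add_two hj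
  norm_num [retractionSeq_neg_one, retractionSeq_neg_two, retractionSeq_zero, BS.rel]

end BSinH

open BSinH in
theorem bs_embeds_in_H_general (n : ℤ) :
    ∃ f : BS →* H,
      f (PresentedGroup.of true) = PresentedGroup.of (n - 1) ∧
      f (PresentedGroup.of false) = PresentedGroup.of (n - 2) * PresentedGroup.of n ∧
      Function.Injective f ∧
      Nonempty (BS ≃* Subgroup.closure
        {(PresentedGroup.of (n - 1) : H),
          PresentedGroup.of (n - 2) * PresentedGroup.of n}) := by
  set c : H := PresentedGroup.of (n - 1)
  set x : H := PresentedGroup.of (n - 2) * PresentedGroup.of n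
  have hrel : c * x * c⁻¹ = x ^ 2 := by
    simpa [show n - 2 + 1 = n - 1 by ring] using H.isHRelSeq_of (n - 2)
  set f := BS.lift hrel
  set r := H.lift (isHRelSeq_retractionSeq.comp_sub n)
  have hrf : Function.LeftInverse r f := by
    refine DFunLike.congr_fun (PresentedGroup.ext (φ := r.comp f) (ψ := MonoidHom.id BS) ?_)
    rintro (_ | _)
    · simp [f, r, x, retractionSeq_neg_two, retractionSeq_zero]
    · simp [f, r, c, retractionSeq_neg_one]
  exact ⟨f, BS.lift_of_true hrel, BS.lift_of_false hrel, hrf.injective,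
    ⟨(MonoidHom.ofInjective hrf.injective).trans (MulEquiv.subgroupCongr (BS.range_lift hrel))⟩⟩

open BSinH in
/-- For `n ≥ 2`, with `c = a_{n-1}` and `x = a_{n-2} aₙ` in `H`, the homomorphism
`BS(1,2) → H` sending `α ↦ c` and `β ↦ x` is injective; in particular the subgroup of `H`
generated by `c` and `x` is isomorphic to `BS(1,2)`. -/
theorem bs_embeds_in_H (n : ℤ) (hn : 2 ≤ n) :
    ∃ f : BS →* H,
      f (PresentedGroup.of true) = PresentedGroup.of (n - 1) ∧
      f (PresentedGroup.of false) = PresentedGroup.of (n - 2) * PresentedGroup.of n ∧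
      Function.Injective f ∧
      Nonempty (BS ≃* Subgroup.closure
        {(PresentedGroup.of (n - 1) : H),
          PresentedGroup.of (n - 2) * PresentedGroup.of n}) :=
  bs_embeds_in_H_general n
end

section
/- For n ≥ 0 let Gₙ = ⟨a₀, ..., aₙ | a_{i+1}(aᵢ a_{i+2}) a_{i+1}⁻¹ = (aᵢ a_{i+2})² for 0 ≤ i ≤ n−2⟩. For every n ≥ 2: the element a_{n−1} has infinite order in G_{n−1}, the element α has infinite order in BS(1,2) = ⟨α, β | α β α⁻¹ = β²⟩, and Gₙ is isomorphic to the amalgamated free product G_{n−1} ∗_ℤ BS(1,2), where the amalgamation identifies the infinite cyclic subgroup of G_{n−1} generated by a_{n−1} with the infinite cyclic subgroup of BS(1,2) generated by α; the isomorphism sends aᵢ ↦ aᵢ for 0 ≤ i ≤ n−1 and aₙ ↦ a_{n−2}⁻¹ β. -/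
/-!
Every generator of `Gₖ`, and `α ∈ BS(1,2)`, has nontrivial image in a homomorphism to `ℤ`, hence
infinite order; abelianised, the relations of `Gₖ` only say `aᵢ a_{i+2} = 1`.

The splitting is a Tietze move: with `α = a_{n-1}` and `β = a_{n-2} aₙ` the last relation of `Gₙ`
becomes `α β α⁻¹ = β²`, and the remaining ones are the relations of `G_{n-1}`. So `aᵢ ↦ aᵢ`,
`aₙ ↦ a_{n-2}⁻¹ β` and, backwards, `aᵢ ↦ aᵢ`, `α ↦ a_{n-1}`, `β ↦ a_{n-2} aₙ` are mutually inverse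
homomorphisms, as one checks on generators.
-/

namespace AmalgamDecomp

/-- The relators `a_{i+1} (aᵢ a_{i+2}) a_{i+1}⁻¹ ((aᵢ a_{i+2})²)⁻¹` for `0 ≤ i ≤ n - 2`,
on the generators `a₀, …, aₙ`. -/
def grels (n : ℕ) : Set (FreeGroup (Fin (n + 1))) :=
  {r | ∃ (i : ℕ) (h : i + 2 ≤ n),
    r = FreeGroup.of ⟨i + 1, by omega⟩ *
        (FreeGroup.of ⟨i, by omega⟩ * FreeGroup.of ⟨i + 2, by omega⟩) *
        (FreeGroup.of ⟨i + 1, by omega⟩)⁻¹ *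
        ((FreeGroup.of ⟨i, by omega⟩ * FreeGroup.of ⟨i + 2, by omega⟩) ^ 2)⁻¹}

/-- `Gₙ = ⟨a₀, …, aₙ | a_{i+1}(aᵢ a_{i+2})a_{i+1}⁻¹ = (aᵢ a_{i+2})², 0 ≤ i ≤ n-2⟩`. -/
abbrev Gp (n : ℕ) : Type := PresentedGroup (grels n)

/-- The single relator `α β α⁻¹ β⁻²` of the Baumslag–Solitar group `BS(1,2)`, with
`α = of true` and `β = of false`. -/
def bsRels : Set (FreeGroup Bool) :=
  {FreeGroup.of true * FreeGroup.of false * (FreeGroup.of true)⁻¹ *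
    ((FreeGroup.of false) ^ 2)⁻¹}

/-- The Baumslag–Solitar group `BS(1,2) = ⟨α, β | α β α⁻¹ = β²⟩`. -/
abbrev BS : Type := PresentedGroup bsRels

/-- The two-element family of groups `{G_k, BS(1,2)}` over which we take the pushout. -/
def fam (k : ℕ) : Bool → Type
  | true => Gp k
  | false => BS

instance (k : ℕ) : (b : Bool) → Group (fam k b)
  | true => inferInstanceAs (Group (Gp k))
  | false => inferInstanceAs (Group BS)

/-- The amalgamating maps `ℤ → G_k` (sending the generator to `a_k`) and
`ℤ → BS(1,2)` (sending the generator to `α`). -/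
def famφ (k : ℕ) : (b : Bool) → Multiplicative ℤ →* fam k b
  | true => zpowersHom (Gp k) (PresentedGroup.of ⟨k, Nat.lt_succ_self k⟩)
  | false => zpowersHom BS (PresentedGroup.of true)

open Monoid

variable {H : Type*} [Group H]

lemma not_isOfFinOrder_of_map_ne_one {G T : Type*} [Monoid G] [Monoid T] [IsMulTorsionFree T]
    (f : G →* T) {g : G} (hg : f g ≠ 1) : ¬ IsOfFinOrder g :=
  fun h => hg (f.isOfFinOrder h).eq_one'

/-- The defining relations of `Gₖ` for a sequence `x`; only `x 0, …, x k` matter. -/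
def GpRelations (k : ℕ) (x : ℕ → H) : Prop :=
  ∀ i, i + 2 ≤ k → x (i + 1) * (x i * x (i + 2)) * (x (i + 1))⁻¹ = (x i * x (i + 2)) ^ 2

lemma gpRelations_of_mul_eq_one {A : Type*} [CommGroup A] (k : ℕ) {x : ℕ → A}
    (hx : ∀ i, x i * x (i + 2) = 1) : GpRelations k x := by
  intro i _
  simp [hx i]

lemma GpRelations.mono {k l : ℕ} {x : ℕ → H} (hx : GpRelations l x) (hkl : k ≤ l) :
    GpRelations k x :=
  fun i hi => hx i (hi.trans hkl)

/-- The generator `aⱼ` of `Gₖ`; indices `j > k` wrap around modulo `k + 1`. -/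
def gen (k j : ℕ) : Gp k := PresentedGroup.of (Fin.ofNat (k + 1) j)

lemma gen_eq_of {k j : ℕ} (hj : j ≤ k) : gen k j = PresentedGroup.of ⟨j, Nat.lt_succ_of_le hj⟩ :=
  congrArg PresentedGroup.of (Fin.ext (Nat.mod_eq_of_lt (Nat.lt_succ_of_le hj)))

lemma gen_val {k : ℕ} (j : Fin (k + 1)) : gen k j = PresentedGroup.of j :=
  congrArg _ (Fin.ofNat_val_eq_self j)

lemma gpRelations_gen (k : ℕ) : GpRelations k (gen k) := by
  intro i hi
  have h := PresentedGroup.one_of_mem (rels := grels k) ⟨i, hi, rfl⟩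
  simp only [map_mul, map_inv, map_pow, mul_inv_eq_one] at h
  rwa [gen_eq_of (by omega : i + 1 ≤ k), gen_eq_of (by omega : i ≤ k), gen_eq_of hi]

namespace Gp

def lift {k : ℕ} (x : ℕ → H) (hx : GpRelations k x) : Gp k →* H :=
  PresentedGroup.toGroup (f := fun j : Fin (k + 1) => x j) <| by
    rintro r ⟨i, hi, rfl⟩
    simp only [map_mul, map_inv, map_pow, FreeGroup.lift_apply_of, mul_inv_eq_one]
    exact hx i hi

lemma lift_gen {k j : ℕ} (x : ℕ → H) (hx : GpRelations k x) (hj : j ≤ k) :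
    lift x hx (gen k j) = x j := by
  rw [gen_eq_of hj]
  exact PresentedGroup.toGroup.of _

lemma hom_ext {k : ℕ} {f f' : Gp k →* H} (h : ∀ j ≤ k, f (gen k j) = f' (gen k j)) : f = f' :=
  PresentedGroup.ext fun j => by rw [← gen_val]; exact h j (Nat.le_of_lt_succ j.isLt)

def inclSucc (k : ℕ) : Gp k →* Gp (k + 1) :=
  lift (gen (k + 1)) ((gpRelations_gen (k + 1)).mono k.le_succ)

lemma inclSucc_gen {k j : ℕ} (hj : j ≤ k) : inclSucc k (gen k j) = gen (k + 1) j :=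
  lift_gen _ _ hj

def toInt (k : ℕ) : Gp k →* Multiplicative ℤ :=
  lift (fun j => .ofAdd ((-1) ^ (j / 2))) <| gpRelations_of_mul_eq_one k fun i => by
    rw [← ofAdd_add, ofAdd_eq_one, show (i + 2) / 2 = i / 2 + 1 by omega, pow_succ]
    ring

lemma not_isOfFinOrder_of {k : ℕ} (j : Fin (k + 1)) :
    ¬ IsOfFinOrder (PresentedGroup.of j : Gp k) := by
  refine not_isOfFinOrder_of_map_ne_one (toInt k) ?_
  rw [← gen_val, toInt, lift_gen _ _ (Nat.le_of_lt_succ j.isLt), ne_eq, ofAdd_eq_one]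
  exact pow_ne_zero _ (by norm_num)

end Gp

namespace BS

lemma relation :
    (PresentedGroup.of true : BS) * PresentedGroup.of false * (PresentedGroup.of true)⁻¹ =
      PresentedGroup.of false ^ 2 := by
  have h := PresentedGroup.one_of_mem (rels := bsRels) rfl
  simpa only [map_mul, map_inv, map_pow, mul_inv_eq_one, PresentedGroup.of] using h

def lift (a b : H) (h : a * b * a⁻¹ = b ^ 2) : BS →* H :=
  PresentedGroup.toGroup (f := fun x : Bool => cond x a b) <| by
    rintro r rfl
    simpa only [map_mul, map_inv, map_pow, FreeGroup.lift_apply_of, cond_true, cond_false,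
      mul_inv_eq_one] using h

@[simp]
lemma lift_alpha (a b : H) (h : a * b * a⁻¹ = b ^ 2) : lift a b h (PresentedGroup.of true) = a :=
  PresentedGroup.toGroup.of _

@[simp]
lemma lift_beta (a b : H) (h : a * b * a⁻¹ = b ^ 2) : lift a b h (PresentedGroup.of false) = b :=
  PresentedGroup.toGroup.of _

lemma not_isOfFinOrder_alpha : ¬ IsOfFinOrder (PresentedGroup.of true : BS) := by
  refine not_isOfFinOrder_of_map_ne_one (lift (Multiplicative.ofAdd (1 : ℤ)) 1 (by simp)) ?_
  simp

end BS

namespace Amalgam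

/- The factor embeddings, typed with `Gp k` and `BS` rather than `fam k b`, so that `map_mul`
and friends see the factors' own multiplications. -/
abbrev ofGp (k : ℕ) : Gp k →* PushoutI (famφ k) := PushoutI.of (φ := famφ k) true

abbrev ofBS (k : ℕ) : BS →* PushoutI (famφ k) := PushoutI.of (φ := famφ k) false

lemma famφ_true_ofAdd_one (k : ℕ) : famφ k true (.ofAdd (1 : ℤ)) = gen k k := by
  rw [gen_eq_of le_rfl]
  exact zpow_one (PresentedGroup.of _ : Gp k)

lemma famφ_false_ofAdd_one (k : ℕ) :
    famφ k false (.ofAdd (1 : ℤ)) = (PresentedGroup.of true : BS) :=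
  zpow_one (PresentedGroup.of true : BS)

lemma ofGp_gen_self (k : ℕ) : ofGp k (gen k k) = ofBS k (PresentedGroup.of true) := by
  have h := PushoutI.of_apply_eq_base (famφ k) true (.ofAdd 1)
  rw [← PushoutI.of_apply_eq_base (famφ k) false (.ofAdd 1)] at h
  rwa [famφ_true_ofAdd_one, famφ_false_ofAdd_one] at h

section Lift

variable {k : ℕ} (f : Gp k →* H) (g : BS →* H) (h : f (gen k k) = g (PresentedGroup.of true))

def lift : PushoutI (famφ k) →* H :=
  PushoutI.lift (fun | true => f | false => g) (zpowersHom H (g (PresentedGroup.of true))) <| by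
    rintro (_ | _) <;> refine MonoidHom.ext_mint ?_ <;>
      rw [MonoidHom.comp_apply, zpowersHom_apply, toAdd_ofAdd, zpow_one]
    · exact congrArg g (famφ_false_ofAdd_one k)
    · exact (congrArg f (famφ_true_ofAdd_one k)).trans h

lemma lift_of_true (x : Gp k) :
    lift f g h (ofGp k x) = f x :=
  PushoutI.lift_of _ _ _ _

lemma lift_of_false (x : BS) :
    lift f g h (ofBS k x) = g x :=
  PushoutI.lift_of _ _ _ _

end Lift

lemma hom_ext {k : ℕ} {f f' : PushoutI (famφ k) →* H}
    (hG : ∀ j ≤ k, f (ofGp k (gen k j)) = f' (ofGp k (gen k j)))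
    (hB : ∀ b : Bool, f (ofBS k (PresentedGroup.of b)) = f' (ofBS k (PresentedGroup.of b))) :
    f = f' :=
  PushoutI.hom_ext_nonempty fun
    | true => Gp.hom_ext (f := f.comp (ofGp k)) hG
    | false => PresentedGroup.ext (φ := f.comp (ofBS k)) hB

end Amalgam

open Amalgam

section Decomposition

variable (m : ℕ)

def toAmalgamGen (j : ℕ) : PushoutI (famφ (m + 1)) :=
  if j ≤ m + 1 then ofGp (m + 1) (gen (m + 1) j)
  else (ofGp (m + 1) (gen (m + 1) m))⁻¹ * ofBS (m + 1) (PresentedGroup.of false)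

lemma gpRelations_toAmalgamGen : GpRelations (m + 2) (toAmalgamGen m) := by
  intro i hi
  rcases Nat.lt_or_ge (i + 2) (m + 2) with hlt | hge
  · have h := congrArg (ofGp (m + 1)) (gpRelations_gen (m + 1) i (by omega))
    simp only [map_mul, map_inv, map_pow] at h
    simpa only [toAmalgamGen, if_pos (by omega : i ≤ m + 1), if_pos (by omega : i + 1 ≤ m + 1),
      if_pos (by omega : i + 2 ≤ m + 1)] using h
  · obtain rfl : m = i := by omega
    have hα : toAmalgamGen m (m + 1) = ofBS (m + 1) (PresentedGroup.of true) := by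
      rw [toAmalgamGen, if_pos le_rfl, ofGp_gen_self]
    have hβ : toAmalgamGen m m * toAmalgamGen m (m + 2) =
        ofBS (m + 1) (PresentedGroup.of false) := by
      rw [toAmalgamGen, toAmalgamGen, if_pos (by omega), if_neg (by omega), mul_inv_cancel_left]
    rw [hα, hβ]
    simpa only [map_mul, map_inv, map_pow] using congrArg (ofBS (m + 1)) BS.relation

def toAmalgam : Gp (m + 2) →* PushoutI (famφ (m + 1)) :=
  Gp.lift (toAmalgamGen m) (gpRelations_toAmalgamGen m)

lemma toAmalgam_gen {j : ℕ} (hj : j ≤ m + 2) : toAmalgam m (gen (m + 2) j) = toAmalgamGen m j :=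
  Gp.lift_gen _ _ hj

def bsToGp : BS →* Gp (m + 2) :=
  BS.lift (gen (m + 2) (m + 1)) (gen (m + 2) m * gen (m + 2) (m + 2))
    (gpRelations_gen (m + 2) m le_rfl)

def ofAmalgam : PushoutI (famφ (m + 1)) →* Gp (m + 2) :=
  Amalgam.lift (Gp.inclSucc (m + 1)) (bsToGp m)
    (by rw [Gp.inclSucc_gen le_rfl, bsToGp, BS.lift_alpha])

lemma ofAmalgam_comp_toAmalgam : (ofAmalgam m).comp (toAmalgam m) = MonoidHom.id _ := by
  refine Gp.hom_ext fun j hj => ?_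
  rw [MonoidHom.comp_apply, toAmalgam_gen m hj, MonoidHom.id_apply, toAmalgamGen]
  split_ifs with hj'
  · rw [ofAmalgam, Amalgam.lift_of_true, Gp.inclSucc_gen hj']
  · obtain rfl : j = m + 2 := by omega
    rw [map_mul, map_inv, ofAmalgam, Amalgam.lift_of_true, Amalgam.lift_of_false,
      Gp.inclSucc_gen (by omega), bsToGp, BS.lift_beta, inv_mul_cancel_left]

lemma toAmalgam_comp_ofAmalgam : (toAmalgam m).comp (ofAmalgam m) = MonoidHom.id _ := by
  refine Amalgam.hom_ext (fun j hj => ?_) (fun b => ?_)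
  · rw [MonoidHom.comp_apply, ofAmalgam, Amalgam.lift_of_true, Gp.inclSucc_gen hj,
      toAmalgam_gen m (by omega), toAmalgamGen, if_pos hj, MonoidHom.id_apply]
  · rw [MonoidHom.comp_apply, ofAmalgam, Amalgam.lift_of_false, bsToGp, MonoidHom.id_apply]
    cases b
    · rw [BS.lift_beta, map_mul, toAmalgam_gen m (by omega), toAmalgam_gen m le_rfl,
        toAmalgamGen, toAmalgamGen, if_pos (by omega), if_neg (by omega), mul_inv_cancel_left]
    · rw [BS.lift_alpha, toAmalgam_gen m (by omega), toAmalgamGen, if_pos le_rfl, ofGp_gen_self]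

def amalgamEquiv : Gp (m + 2) ≃* PushoutI (famφ (m + 1)) :=
  (toAmalgam m).toMulEquiv (ofAmalgam m) (ofAmalgam_comp_toAmalgam m) (toAmalgam_comp_ofAmalgam m)

end Decomposition

end AmalgamDecomp

open AmalgamDecomp Monoid in
/-- For every `n ≥ 2`: `a_{n-1}` has infinite order in `G_{n-1}`, `α` has infinite order
in `BS(1,2)`, and `Gₙ ≅ G_{n-1} ∗_ℤ BS(1,2)`, the amalgamation identifying
`⟨a_{n-1}⟩ ≤ G_{n-1}` with `⟨α⟩ ≤ BS(1,2)`; the isomorphism sends `aᵢ ↦ aᵢ` for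
`0 ≤ i ≤ n-1` and `aₙ ↦ a_{n-2}⁻¹ β`. -/
theorem Gn_iso_amalgam (n : ℕ) (hn : 2 ≤ n) :
    ¬ IsOfFinOrder
      (PresentedGroup.of (⟨n - 1, Nat.lt_succ_self _⟩ : Fin (n - 1 + 1)) : Gp (n - 1)) ∧
    ¬ IsOfFinOrder (PresentedGroup.of true : BS) ∧
    ∃ e : Gp n ≃* PushoutI (famφ (n - 1)),
      (∀ (i : ℕ) (hi : i ≤ n - 1),
        e (PresentedGroup.of ⟨i, by omega⟩) =
          PushoutI.of (φ := famφ (n - 1)) true (PresentedGroup.of ⟨i, by omega⟩)) ∧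
      e (PresentedGroup.of ⟨n, Nat.lt_succ_self n⟩) =
        (PushoutI.of (φ := famφ (n - 1)) true (PresentedGroup.of ⟨n - 2, by omega⟩))⁻¹ *
          PushoutI.of (φ := famφ (n - 1)) false (PresentedGroup.of false) := by
  obtain ⟨m, rfl⟩ : ∃ m, n = m + 2 := ⟨n - 2, by omega⟩
  refine ⟨Gp.not_isOfFinOrder_of _, BS.not_isOfFinOrder_alpha, amalgamEquiv m,
    fun i (hi : i ≤ m + 1) => ?_, ?_⟩
  · have h := toAmalgam_gen m (by omega : i ≤ m + 2)
    rwa [toAmalgamGen, if_pos hi, gen_eq_of (by omega), gen_eq_of hi] at h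
  · have h := toAmalgam_gen m le_rfl
    rwa [toAmalgamGen, if_neg (by omega), gen_eq_of le_rfl, gen_eq_of (by omega)] at h
end

section
/- Let s ≥ 1, m ≥ 2, and let W(x₁, ..., xₛ) be a nontrivial positive word in the free group on x₁, ..., xₛ that involves both x₁ and xₛ. Let H_W be the group with presentation ⟨aₙ (n ∈ ℤ) | a_{n+1}(W(a_{n−s+1}, ..., aₙ) a_{n+2}) a_{n+1}⁻¹ = (W(a_{n−s+1}, ..., aₙ) a_{n+2})ᵐ for all n ∈ ℤ⟩. Then for every 0 ≤ n ≤ s, the subgroup of H_W generated by a₀, a₁, ..., aₙ is a free group of rank n+1, freely generated by a₀, ..., aₙ. -/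
namespace HW

/-- The substituted positive word `W(a_{n-s+1}, …, aₙ)` in the free group on the
generators `aₖ`, `k ∈ ℤ`: the positive word `W` in `x₁, …, xₛ` is encoded by the
(nonempty) list `w` of its letters, where an entry `j : Fin s` stands for the generator
`x_{j+1}`, which is substituted by `a_{n-s+1+j}`. -/
def Wsub {s : ℕ} (w : List (Fin s)) (n : ℤ) : FreeGroup ℤ :=
  (w.map fun j => FreeGroup.of (n - s + 1 + (j : ℕ))).prod

/-- The relators
`a_{n+1} (W(a_{n-s+1},…,aₙ) a_{n+2}) a_{n+1}⁻¹ ((W(a_{n-s+1},…,aₙ) a_{n+2})ᵐ)⁻¹`,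
`n ∈ ℤ`. -/
def HWrels (s m : ℕ) (w : List (Fin s)) : Set (FreeGroup ℤ) :=
  {r | ∃ n : ℤ, r = FreeGroup.of (n + 1) * (Wsub w n * FreeGroup.of (n + 2)) *
    (FreeGroup.of (n + 1))⁻¹ * ((Wsub w n * FreeGroup.of (n + 2)) ^ m)⁻¹}

/-- The group `H_W`. -/
abbrev Hgroup (s m : ℕ) (w : List (Fin s)) : Type := PresentedGroup (HWrels s m w)

end HW

/-! Substituting for the generators a sequence with `b_{k+s+1} = W(b_k, …, b_{k+s-1})⁻¹` makes
`W(a_{n-s+1}, …, aₙ) a_{n+2}` trivial, so it kills every relator whose indices lie in the range of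
the sequence. A relation among `a₀, …, aₙ` is a consequence of finitely many relators; starting the
sequence far enough to the left at free generators `y₀, …, yₛ` therefore gives a homomorphism
killing them which sends `a₀, …, aₙ` to the images of `y₀, …, yₙ` under a power of the
endomorphism `yᵢ ↦ yᵢ₊₁ (i < s)`, `yₛ ↦ W(y₀, …, y_{s-1})⁻¹` of `F(y₀, …, yₛ)`.

This endomorphism is injective. Its image is free (Nielsen–Schreier) of rank at most `s + 1`,
being generated by `s + 1` elements, and at least `s + 1`, because `x₁` occurs in the positive
word `W`, so no nontrivial `ℤ`-character vanishes on the image. Hence it is a surjection of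
`F_{s+1}` onto a copy of itself, injective because free groups of finite rank are Hopfian: a
surjective endomorphism permutes the finitely many homomorphisms into each finite group, and an
element `x ≠ 1` is detected by the permutation action of the generators on the suffixes of a word
of `x`.
-/

open Function

theorem Finset.exists_perm_apply_eq_mul {G : Type*} [Group G] (P : Finset G) (g : G) :
    ∃ σ : Equiv.Perm P, ∀ p q : P, (q : G) = g * p → σ p = q := by
  classical
  let e : {p : P // g * p ∈ P} ≃ {q : P // g⁻¹ * q ∈ P} :=
    { toFun := fun p => ⟨⟨g * p, p.2⟩, by simp⟩
      invFun := fun q => ⟨⟨g⁻¹ * q, q.2⟩, by simp⟩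
      left_inv := fun p => by ext; simp
      right_inv := fun q => by ext; simp }
  refine ⟨e.extendSubtype, fun p q hq => ?_⟩
  rw [e.extendSubtype_apply_of_mem p (hq ▸ q.2)]
  exact Subtype.ext hq.symm

theorem FreeGroup.exists_hom_perm_ne_one {α : Type*} {x : FreeGroup α} (hx : x ≠ 1) :
    ∃ (P : Finset (FreeGroup α)) (φ : FreeGroup α →* Equiv.Perm P), φ x ≠ 1 := by
  classical
  let P := (x.toWord.tails.map mk).toFinset
  have hP : ∀ L, L <:+ x.toWord → mk L ∈ P := fun L hL => by simpa [P] using ⟨L, hL, rfl⟩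
  choose σ hσ using fun a : α => P.exists_perm_apply_eq_mul (of a)
  let φ := lift σ
  let one : P := ⟨1, hP [] List.nil_suffix⟩
  have orbit : ∀ L, L <:+ x.toWord → (φ (mk L) one : FreeGroup α) = mk L := by
    intro L hL
    induction L with
    | nil => rfl
    | cons l t ih =>
      obtain ⟨a, b⟩ := l
      have hq := ih ((List.suffix_cons _ t).trans hL)
      let q' : P := ⟨mk ((a, b) :: t), hP _ hL⟩
      change (φ (mk [(a, b)] * mk t) one : FreeGroup α) = q'
      rw [_root_.map_mul, Equiv.Perm.mul_apply]
      congr 1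
      cases b
      · change φ (of a)⁻¹ _ = _
        rw [_root_.map_inv, lift_apply_of, Equiv.Perm.inv_eq_iff_eq]
        exact (hσ a _ _ (by
          rw [hq]; exact (mul_inv_cancel_left (of a) (mk t)).symm)).symm
      · exact hσ a _ _ (by rw [hq]; rfl)
  refine ⟨P, φ, fun h => hx ?_⟩
  have := orbit _ List.suffix_rfl
  rwa [mk_toWord, h, eq_comm] at this

theorem FreeGroup.injective_of_surjective {α : Type*} [Finite α]
    {θ : FreeGroup α →* FreeGroup α} (hθ : Surjective θ) : Injective θ := by
  refine (injective_iff_map_eq_one θ).2 fun x hx => by_contra fun hne => ?_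
  obtain ⟨P, φ, hφ⟩ := exists_hom_perm_ne_one hne
  have : Finite (FreeGroup α →* Equiv.Perm P) := Finite.of_injective _ lift.symm.injective
  have hcomp : Injective fun ψ : FreeGroup α →* Equiv.Perm P => ψ.comp θ :=
    fun _ _ => (MonoidHom.cancel_right hθ).1
  obtain ⟨ψ, rfl⟩ := Finite.surjective_of_injective hcomp φ
  exact hφ (by simp [hx])

open IsFreeGroup in
theorem IsFreeGroup.finite_generators_and_card_le {G α : Type*} [Group G] [IsFreeGroup G]
    [Finite α] (π : FreeGroup α →* G) (hπ : Surjective π) :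
    Finite (Generators G) ∧ Nat.card (Generators G) ≤ Nat.card α := by
  let Q := Multiplicative (ZMod 2)
  let restrict : (Generators G → Q) → (α → Q) := fun u a => lift u (π (FreeGroup.of a))
  have hrestrict : Injective restrict := fun u u' h => lift.injective <|
    (MonoidHom.cancel_right hπ).1 <| FreeGroup.ext_hom _ _ fun a => congrFun h a
  have : Finite (Generators G → Q) := Finite.of_injective _ hrestrict
  have hfin : Finite (Generators G) := by
    by_contra h
    have : Infinite (Generators G) := not_finite_iff_infinite.mp h
    exact not_finite (Generators G → Q)
  refine ⟨hfin, (Nat.pow_le_pow_iff_right one_lt_two).1 ?_⟩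
  simpa [Nat.card_fun, Q] using Nat.card_le_card_of_injective _ hrestrict

theorem Subgroup.card_le_card_generators {α : Type*} [Finite α] (H : Subgroup (FreeGroup α))
    [Finite (IsFreeGroup.Generators H)]
    (hH : ∀ χ : FreeGroup α →* Multiplicative ℤ, H ≤ χ.ker → χ = 1) :
    Nat.card α ≤ Nat.card (IsFreeGroup.Generators H) := by
  have := Fintype.ofFinite α
  have := Fintype.ofFinite (IsFreeGroup.Generators H)
  let char : (α → ℤ) → FreeGroup α →* Multiplicative ℤ := fun v =>
    FreeGroup.lift (Multiplicative.ofAdd ∘ v)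
  have char_add : ∀ v v', char (v + v') = char v * char v' := fun v v' =>
    FreeGroup.ext_hom _ _ fun a => by simp [char, ofAdd_add]
  let restrict : (α → ℤ) →+ (IsFreeGroup.Generators H → ℤ) :=
    AddMonoidHom.mk' (fun v x => Multiplicative.toAdd (char v (IsFreeGroup.of x : H)))
      fun v v' => by ext x; simp [char_add]
  have hrestrict : Injective restrict := by
    refine (injective_iff_map_eq_zero restrict).2 fun v hv => ?_
    have hχH : (char v).comp H.subtype = 1 :=
      IsFreeGroup.ext_hom fun x => by simpa [restrict] using congrFun hv x
    have hχ : char v = 1 := hH _ fun h hh => DFunLike.congr_fun hχH (⟨h, hh⟩ : H)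
    funext a
    simpa [char] using DFunLike.congr_fun hχ (FreeGroup.of a)
  simpa using LinearMap.finrank_le_finrank_of_injective (f := restrict.toIntLinearMap) hrestrict

theorem FreeGroup.injective_of_forall_comp_eq_one {α : Type*} [Finite α]
    (Ψ : FreeGroup α →* FreeGroup α)
    (hΨ : ∀ χ : FreeGroup α →* Multiplicative ℤ, χ.comp Ψ = 1 → χ = 1) : Injective Ψ := by
  obtain ⟨hfin, hle⟩ :=
    IsFreeGroup.finite_generators_and_card_le Ψ.rangeRestrict Ψ.rangeRestrict_surjective
  have hge := Ψ.range.card_le_card_generators fun χ hχ => hΨ χ ((Ψ.range_le_ker_iff χ).1 hχ)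
  obtain ⟨e⟩ := Finite.card_eq.1 (le_antisymm hle hge)
  let μ : Ψ.range ≃* FreeGroup α := (IsFreeGroup.toFreeGroup _).trans (freeGroupCongr e)
  have hinj := injective_of_surjective (θ := μ.toMonoidHom.comp Ψ.rangeRestrict)
    (μ.surjective.comp Ψ.rangeRestrict_surjective)
  rw [← Ψ.subtype_comp_rangeRestrict]
  exact Subtype.val_injective.comp (μ.injective.of_comp_iff _ |>.1 hinj)

theorem Subgroup.eventually_map_eq_one_of_mem_normalClosure {G H ι : Type*} [Group G] [Group H]
    {l : Filter ι} {f : ι → G →* H} {R : Set G} (hR : ∀ r ∈ R, ∀ᶠ i in l, f i r = 1) {g : G}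
    (hg : g ∈ Subgroup.normalClosure R) : ∀ᶠ i in l, f i g = 1 := by
  let K : Subgroup G :=
    { carrier := {g | ∀ᶠ i in l, f i g = 1}
      one_mem' := by simp
      mul_mem' := fun ha hb => (ha.and hb).mono fun i h => by simp [h.1, h.2]
      inv_mem' := fun ha => ha.mono fun i h => by simp [h] }
  have : K.Normal := ⟨fun a ha b => ha.mono fun i h => by simp [h]⟩
  exact Subgroup.normalClosure_le_normal (N := K) hR hg

namespace HW

variable {s : ℕ} (w : List (Fin s))

def shiftHom : Monoid.End (FreeGroup (Fin (s + 1))) :=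
  FreeGroup.lift <| Fin.snoc (α := fun _ => FreeGroup (Fin (s + 1)))
    (fun i => FreeGroup.of i.succ) (w.map fun j => FreeGroup.of j.castSucc).prod⁻¹

def shiftSeq (k : ℕ) : FreeGroup (Fin (s + 1)) := (shiftHom w ^ k) (FreeGroup.of 0)

theorem shiftHom_of_castSucc (i : Fin s) :
    shiftHom w (FreeGroup.of i.castSucc) = FreeGroup.of i.succ :=
  FreeGroup.lift_apply_of.trans (Fin.snoc_castSucc ..)

theorem shiftHom_of_last :
    shiftHom w (FreeGroup.of (Fin.last s)) = (w.map fun j => FreeGroup.of j.castSucc).prod⁻¹ :=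
  FreeGroup.lift_apply_of.trans (Fin.snoc_last ..)

theorem shiftHom_pow_of (t : ℕ) (j : Fin (s + 1)) :
    (shiftHom w ^ t) (FreeGroup.of j) = shiftSeq w (t + j) := by
  induction j using Fin.induction generalizing t with
  | zero => rfl
  | succ j ih =>
    rw [← shiftHom_of_castSucc, ← comp_apply (f := ⇑(shiftHom w ^ t)), ← Monoid.End.coe_mul,
      ← pow_succ, ih]
    simp only [Fin.val_castSucc, Fin.val_succ]
    congr 1; omega

theorem shiftSeq_recurrence (t : ℕ) :
    (w.map fun j : Fin s => shiftSeq w (t + j)).prod * shiftSeq w (t + s + 1) = 1 := by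
  have hlast : shiftSeq w (t + s + 1) =
      (shiftHom w ^ t) (shiftHom w (FreeGroup.of (Fin.last s))) := by
    rw [← comp_apply (f := ⇑(shiftHom w ^ t)), ← Monoid.End.coe_mul, ← pow_succ,
      shiftHom_pow_of]
    simp [add_right_comm]
  rw [hlast, shiftHom_of_last, map_inv, map_list_prod, List.map_map, mul_inv_eq_one]
  congr 1
  exact List.map_congr_left fun j _ => (shiftHom_pow_of w t j.castSucc).symm

-- In `Wsub` the ascription `(j : ℕ)` elaborates as a coercion of the list `w` to `List ℕ`.
theorem Wsub_eq (n : ℤ) :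
    Wsub w n = (w.map fun j : Fin s => FreeGroup.of (n - s + 1 + (j : ℕ))).prod := by
  have : ((do let a ← w; pure (a : ℕ)) : List ℕ) = w.map Fin.val := by
    simp [List.map_eq_flatMap]
  rw [Wsub, this, List.map_map]
  rfl

def seqHom (N : ℕ) : FreeGroup ℤ →* FreeGroup (Fin (s + 1)) :=
  FreeGroup.lift fun k => if 0 ≤ k + N then shiftSeq w (k + N).toNat else 1

theorem seqHom_of {N : ℕ} {k : ℤ} (h : 0 ≤ k + N) :
    seqHom w N (FreeGroup.of k) = shiftSeq w (k + N).toNat := by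
  simp [seqHom, h]

theorem seqHom_relator {N : ℕ} {p : ℤ} (hp : s ≤ p + N + 1) (m : ℕ) :
    seqHom w N (FreeGroup.of (p + 1) * (Wsub w p * FreeGroup.of (p + 2)) *
      (FreeGroup.of (p + 1))⁻¹ * ((Wsub w p * FreeGroup.of (p + 2)) ^ m)⁻¹) = 1 := by
  have hkill : seqHom w N (Wsub w p * FreeGroup.of (p + 2)) = 1 := by
    set t := (p - s + 1 + N).toNat
    have hW : seqHom w N (Wsub w p) = (w.map fun j : Fin s => shiftSeq w (t + j)).prod := by
      rw [Wsub_eq, map_list_prod, List.map_map]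
      exact congrArg _ <| List.map_congr_left fun j _ => by
        rw [comp_apply, seqHom_of w (by omega)]; congr 1; omega
    have hlast : seqHom w N (FreeGroup.of (p + 2)) = shiftSeq w (t + s + 1) := by
      rw [seqHom_of w (by omega)]; congr 1; omega
    rw [map_mul, hW, hlast, shiftSeq_recurrence]
  simp only [map_mul, map_inv, map_pow, hkill]
  group

theorem shiftHom_injective (hs : 0 < s) (h0 : (⟨0, hs⟩ : Fin s) ∈ w) :
    Injective (shiftHom w) := by
  refine FreeGroup.injective_of_forall_comp_eq_one _ fun χ hχ => ?_
  have hχΦ : ∀ x, χ (shiftHom w x) = 1 := fun x => DFunLike.congr_fun hχ x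
  have hsucc : ∀ i : Fin s, χ (FreeGroup.of i.succ) = 1 := fun i => by
    simpa [shiftHom_of_castSucc] using hχΦ (FreeGroup.of i.castSucc)
  have hzero : χ (FreeGroup.of 0) = 1 := by
    have h := hχΦ (FreeGroup.of (Fin.last s))
    rw [shiftHom_of_last, map_inv, inv_eq_one, map_list_prod, List.map_map,
      List.prod_map_eq_pow_single ⟨0, hs⟩ _ fun j hj _ => ?_] at h
    · exact (pow_eq_one_iff_left (List.count_pos_iff.2 h0).ne').1 h
    · have hj0 : (j : ℕ) ≠ 0 := fun h => hj (Fin.ext h)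
      obtain ⟨i, hi⟩ : ∃ i : Fin s, j.castSucc = i.succ :=
        ⟨⟨j - 1, by omega⟩, Fin.ext <| by simp; omega⟩
      simpa [hi] using hsucc i
  exact FreeGroup.ext_hom _ _ fun k => Fin.cases hzero hsucc k

theorem shiftHom_pow_injective (hs : 0 < s) (h0 : (⟨0, hs⟩ : Fin s) ∈ w) (N : ℕ) :
    Injective (shiftHom w ^ N) := by
  rw [Monoid.End.coe_pow]
  exact (shiftHom_injective w hs h0).iterate N

theorem seqHom_eventually_eq_one (m : ℕ) :
    ∀ r ∈ HWrels s m w, ∀ᶠ N in Filter.atTop, seqHom w N r = 1 := by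
  rintro r ⟨p, rfl⟩
  filter_upwards [Filter.eventually_ge_atTop (s - p).toNat] with N hN
  exact seqHom_relator w (by omega) m

end HW

open HW in
/-- Let `s ≥ 1`, `m ≥ 2`, and let `W` be a nontrivial positive word in `x₁, …, xₛ`
(encoded by the nonempty list `w` of its letters) involving both `x₁` and `xₛ`.
Then for every `0 ≤ n ≤ s`, the subgroup of `H_W` generated by `a₀, a₁, …, aₙ` is free of
rank `n + 1`, freely generated by `a₀, …, aₙ`: the canonical homomorphism from the free
group on `n + 1` generators sending the `i`-th generator to `aᵢ` is injective. -/
theorem initial_generators_free (s m : ℕ) (hs : 1 ≤ s)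
    (w : List (Fin s))
    (hfirst : (⟨0, by omega⟩ : Fin s) ∈ w)
    (n : ℕ) (hn : n ≤ s) :
    Function.Injective
      (FreeGroup.lift (fun i : Fin (n + 1) =>
        (PresentedGroup.of ((i : ℕ) : ℤ) : Hgroup s m w))) := by
  set ι := FreeGroup.map fun i : Fin (n + 1) => ((i : ℕ) : ℤ)
  have hlift : FreeGroup.lift (fun i : Fin (n + 1) => (PresentedGroup.of ((i : ℕ) : ℤ) :
      Hgroup s m w)) = (PresentedGroup.mk _).comp ι := FreeGroup.ext_hom _ _ fun i => rfl
  rw [hlift, injective_iff_map_eq_one]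
  intro g hg
  obtain ⟨N, hN⟩ := (Subgroup.eventually_map_eq_one_of_mem_normalClosure
    (seqHom_eventually_eq_one w m) (PresentedGroup.mk_eq_one_iff.1 hg)).exists
  have hcomp : (seqHom w N).comp ι =
      (shiftHom w ^ N).comp (FreeGroup.map (Fin.castLE (by omega))) :=
    FreeGroup.ext_hom _ _ fun i => by
      rw [MonoidHom.comp_apply, FreeGroup.map.of, seqHom_of w (by omega)]
      change _ = (shiftHom w ^ N) (FreeGroup.of (Fin.castLE _ i))
      rw [shiftHom_pow_of]
      congr 1
      simp
      omega
  have hinj : Injective ((seqHom w N).comp ι) := by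
    rw [hcomp]
    exact (shiftHom_pow_injective w (by omega) hfirst N).comp
      (FreeGroup.map_injective (Fin.castLE_injective _))
  exact hinj (by simpa using hN)
end
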